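/- Suppose G carries a family (Γ_r)_{r>0} of dilations: each Γ_r is a homeomorphic group automorphism of G, Γ_r ∘ Γ_s = Γ_{rs} for all r, s > 0, for each x ∈ G the map r ↦ Γ_r(x) is continuous with Γ_r(x) → e as r ↓ 0, and there exists Q ∈ ℕ such that μ(Γ_r(E)) = r^Q · μ(E) for every Borel set E ⊆ G and every r > 0. Let E ⊆ G be a Borel set with 0 < μ(E) < ∞ and let (r_k)_{k∈ℕ} be a sequence of positive reals with r_k → ∞. Then (Γ_{r_k}(E))_{k∈ℕ} is a Følner sequence in G. -/

import Mathlib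

/-!
Pulling back by `Γ_r` gives `β_{Γ_r E}(x) = β_E(Γ_{1/r} x)`, since `Γ_r` is an automorphism
scaling `μ` by the constant `r^Q`. Translation is continuous in measure, so `β_E(y) → 0` as
`y → e`; and `Γ_s → e` uniformly on compact sets as `s ↓ 0`, because pointwise convergence of
continuous homomorphisms is upgraded to uniform convergence on compacts by a Baire category
argument. Hence `β_{Γ_{r_k} E} → 0` uniformly on compacts when `r_k → ∞`.
-/

open MeasureTheory Filter Topology
open scoped Pointwise ENNReal symmDiff

/-- For a Borel set `E` with `0 < μ E < ∞`, the Følner defect function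
`β_E(x) = μ(E \ Ex⁻¹) / μ(E)`. Here `Ex⁻¹ = {y | yx ∈ E} = (· * x) ⁻¹' E`. -/
noncomputable def folnerDefect {G : Type*} [Group G] [MeasurableSpace G]
    (μ : Measure G) (E : Set G) (x : G) : ℝ :=
  (μ (E \ (· * x) ⁻¹' E)).toReal / (μ E).toReal

/-- A sequence of Borel sets of finite positive measure is a Følner sequence if
`β_{E k} → 0` uniformly on every compact subset of `G`. -/
def IsFolnerSeq {G : Type*} [Group G] [TopologicalSpace G] [MeasurableSpace G]
    (μ : Measure G) (E : ℕ → Set G) : Prop :=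
  ∀ K : Set G, IsCompact K →
    TendstoUniformlyOn (fun k x => folnerDefect μ (E k) x) 0 atTop K

section Defect

variable {G : Type*} [Group G] [MeasurableSpace G]

lemma folnerDefect_nonneg (μ : Measure G) (E : Set G) (x : G) : 0 ≤ folnerDefect μ E x := by
  unfold folnerDefect; positivity

lemma isFolnerSeq_of_forall_eventually_lt [TopologicalSpace G] {μ : Measure G} {F : ℕ → Set G}
    (h : ∀ K : Set G, IsCompact K → ∀ ε > 0, ∀ᶠ k in atTop, ∀ x ∈ K, folnerDefect μ (F k) x < ε) :
    IsFolnerSeq μ F := by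
  intro K hK
  rw [Metric.tendstoUniformlyOn_iff]
  intro ε hε
  filter_upwards [h K hK ε hε] with k hk x hx
  rw [Pi.zero_apply, dist_zero_left, Real.norm_of_nonneg (folnerDefect_nonneg _ _ _)]
  exact hk x hx

lemma folnerDefect_image_apply {H : Type*} [Group H] [MeasurableSpace H] [MeasurableMul G]
    {μ : Measure G} {ν : Measure H} (φ : G ≃* H) {c : ℝ≥0∞} (hc₀ : c ≠ 0) (hc : c ≠ ∞)
    (hφ : ∀ F, MeasurableSet F → ν (φ '' F) = c * μ F) {E : Set G} (hE : MeasurableSet E)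
    (y : G) : folnerDefect ν (φ '' E) (φ y) = folnerDefect μ E y := by
  have himage : φ '' E \ (· * φ y) ⁻¹' (φ '' E) = φ '' (E \ (· * y) ⁻¹' E) := by
    rw [Set.image_sdiff φ.injective]
    congr 1
    ext z
    obtain ⟨w, rfl⟩ := φ.surjective z
    simp [← map_mul]
  have hc' : c.toReal ≠ 0 := ENNReal.toReal_ne_zero.2 ⟨hc₀, hc⟩
  rw [folnerDefect, folnerDefect, himage, hφ _ (hE.diff (hE.preimage (measurable_mul_const y))),
    hφ E hE, ENNReal.toReal_mul, ENNReal.toReal_mul, mul_div_mul_left _ _ hc']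

lemma tendsto_folnerDefect_nhds_one [TopologicalSpace G] [IsTopologicalGroup G]
    [WeaklyLocallyCompactSpace G] [BorelSpace G] (μ : Measure G) [μ.IsMulRightInvariant]
    [μ.Regular] {E : Set G} (hE : MeasurableSet E) (hEfin : μ E ≠ ∞) :
    Tendsto (folnerDefect μ E) (𝓝 1) (𝓝 0) := by
  let mulRight : C(G, C(G, G)) := ContinuousMap.curry ⟨fun p : G × G => p.2 * p.1, by fun_prop⟩
  have hsymm : Tendsto (fun y => μ (((· * y) ⁻¹' E) ∆ ((· * 1) ⁻¹' E))) (𝓝 1) (𝓝 0) :=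
    tendsto_measure_symmDiff_preimage_nhds_zero (f := mulRight) (g := mulRight 1)
      (mulRight.continuous.tendsto 1)
      (Eventually.of_forall fun y => measurePreserving_mul_right μ y)
      (measurePreserving_mul_right μ 1) hE.nullMeasurableSet hEfin
  have hdiff : Tendsto (fun y => μ (E \ (· * y) ⁻¹' E)) (𝓝 1) (𝓝 0) := by
    refine tendsto_of_tendsto_of_tendsto_of_le_of_le tendsto_const_nhds hsymm (fun _ => bot_le)
      fun y => measure_mono ?_
    simp only [mul_one, Set.preimage_id', symmDiff_def]
    exact Set.subset_union_right
  have := ((ENNReal.tendsto_toReal ENNReal.zero_ne_top).comp hdiff).div_const (μ E).toReal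
  rw [ENNReal.toReal_zero, zero_div] at this
  exact this

end Defect

section UniformConvergence

variable {ι G H : Type*} [TopologicalSpace G] [Group G] [IsTopologicalGroup G]
  [TopologicalSpace H] [Group H] [IsTopologicalGroup H] {l : Filter ι} {φ : ι → G →* H}

theorem exists_mem_nhds_one_eventually_mapsTo [BaireSpace G] [l.IsCountablyGenerated]
    (hcont : ∀ᶠ i in l, Continuous (φ i)) (hφ : ∀ x, Tendsto (fun i => φ i x) l (𝓝 1))
    {U : Set H} (hU : U ∈ 𝓝 1) : ∃ W ∈ 𝓝 (1 : G), ∀ᶠ i in l, Set.MapsTo (φ i) W U := by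
  obtain ⟨C, hC, hCclosed, hCinv, hCU⟩ := exists_closed_nhds_one_inv_eq_mul_subset hU
  obtain ⟨S, hS, hScont⟩ := hcont.exists_mem
  obtain ⟨B, hB⟩ := l.exists_antitone_basis
  set A : ℕ → Set G := fun n => {x | ∀ i ∈ B n ∩ S, φ i x ∈ C}
  have hAclosed : ∀ n, IsClosed (A n) := fun n => by
    simp only [A, Set.ofPred_forall]
    exact isClosed_biInter fun i hi => hCclosed.preimage (hScont i hi.2)
  have hAcover : ⋃ n, A n = Set.univ := Set.eq_univ_of_forall fun x => by
    obtain ⟨n, hn⟩ := hB.mem_iff.1 (hφ x hC)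
    exact Set.mem_iUnion.2 ⟨n, fun i hi => hn hi.1⟩
  obtain ⟨n, x₀, hx₀⟩ := nonempty_interior_of_iUnion_of_closed hAclosed hAcover
  refine ⟨(x₀ * ·) ⁻¹' interior (A n), ?_, ?_⟩
  · exact (isOpen_interior.preimage (continuous_const_mul x₀)).mem_nhds (by simpa using hx₀)
  · filter_upwards [inter_mem (hB.mem n) hS] with i hi w hw
    have hx₀C : φ i x₀ ∈ C := interior_subset hx₀ i hi
    have hx₀wC : φ i (x₀ * w) ∈ C := interior_subset hw i hi
    have : φ i w = (φ i x₀)⁻¹ * φ i (x₀ * w) := by rw [map_mul, inv_mul_cancel_left]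
    rw [this]
    exact hCU (Set.mul_mem_mul (by rwa [← hCinv, Set.inv_mem_inv]) hx₀wC)

theorem IsCompact.eventually_forall_mem_of_tendsto_one [BaireSpace G] [l.IsCountablyGenerated]
    (hcont : ∀ᶠ i in l, Continuous (φ i)) (hφ : ∀ x, Tendsto (fun i => φ i x) l (𝓝 1))
    {K : Set G} (hK : IsCompact K) {U : Set H} (hU : U ∈ 𝓝 1) :
    ∀ᶠ i in l, ∀ x ∈ K, φ i x ∈ U := by
  obtain ⟨V, hV, hVU⟩ := exists_nhds_one_split hU
  obtain ⟨W, hW, hWV⟩ := exists_mem_nhds_one_eventually_mapsTo hcont hφ hV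
  have hlocal : ∀ y ∈ K, {p : ι × G | φ p.1 p.2 ∈ U} ∈ l ×ˢ 𝓝 y := fun y _ => by
    have hyW : ∀ᶠ x in 𝓝 y, y⁻¹ * x ∈ W :=
      ((continuous_const_mul y⁻¹).tendsto' y 1 (inv_mul_cancel y)).eventually hW
    filter_upwards [((hφ y).eventually hV).and hWV |>.prod_mk hyW] with ⟨i, x⟩ ⟨⟨hy, hi⟩, hx⟩
    simpa [← map_mul] using hVU _ hy _ (hi hx)
  have huniform : ∀ᶠ p in l ×ˢ 𝓝ˢ K, φ p.1 p.2 ∈ U := hK.mem_prod_nhdsSet_of_forall hlocal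
  exact huniform.curry.mono fun _ h => h.self_of_nhdsSet

end UniformConvergence

theorem isFolnerSeq_dilations_general {G : Type*} [Group G] [TopologicalSpace G]
    [IsTopologicalGroup G] [LocallyCompactSpace G] [MeasurableSpace G] [BorelSpace G]
    (μ : Measure G) [μ.IsMulRightInvariant] [μ.Regular]
    -- the family of dilations: each `Γ r`, `r > 0`, is a group automorphism of `G`,
    (Γ : ℝ → G ≃* G)
    -- which is a homeomorphism,
    (hΓcont : ∀ r : ℝ, 0 < r → Continuous (Γ r) ∧ Continuous (Γ r).symm)
    -- satisfying `Γ r ∘ Γ s = Γ (r * s)`,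
    (hΓmul : ∀ r s : ℝ, 0 < r → 0 < s → ∀ x : G, Γ r (Γ s x) = Γ (r * s) x)
    -- with `Γ r x → e` as `r ↓ 0`,
    (hΓzero : ∀ x : G, Tendsto (fun r : ℝ => Γ r x) (nhdsWithin 0 (Set.Ioi 0)) (nhds 1))
    -- and scaling the Haar measure by `r^Q`:
    (Q : ℕ)
    (hΓmeas : ∀ (E : Set G), MeasurableSet E → ∀ r : ℝ, 0 < r →
      μ (Γ r '' E) = ENNReal.ofReal (r ^ Q) * μ E)
    (E : Set G) (hE : MeasurableSet E) (hEfin : μ E < ∞)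
    (r : ℕ → ℝ) (hrtop : Tendsto r atTop atTop) :
    IsFolnerSeq μ (fun k => Γ (r k) '' E) := by
  have hΓone : ∀ x, Γ 1 x = x := fun x =>
    (Γ 1).injective (by rw [hΓmul 1 1 one_pos one_pos, mul_one])
  have hΓcancel : ∀ ρ > 0, ∀ x, Γ ρ (Γ ρ⁻¹ x) = x := fun ρ hρ x => by
    rw [hΓmul ρ ρ⁻¹ hρ (inv_pos.2 hρ), mul_inv_cancel₀ hρ.ne', hΓone]
  refine isFolnerSeq_of_forall_eventually_lt fun K hK ε hε => ?_
  have hsmall : ∀ᶠ s in 𝓝[>] (0 : ℝ), ∀ x ∈ K, Γ s x ∈ {y | folnerDefect μ E y < ε} :=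
    hK.eventually_forall_mem_of_tendsto_one (l := 𝓝[>] 0) (φ := fun s => (Γ s).toMonoidHom)
      (eventually_mem_nhdsWithin.mono fun s hs => (hΓcont s hs).1) hΓzero
      ((tendsto_folnerDefect_nhds_one μ hE hEfin.ne).eventually (gt_mem_nhds hε))
  filter_upwards [(tendsto_inv_atTop_nhdsGT_zero.comp hrtop).eventually hsmall,
    hrtop.eventually_gt_atTop 0] with k hk hrk x hx
  rw [← hΓcancel _ hrk x, folnerDefect_image_apply (Γ (r k))
    (ENNReal.ofReal_pos.2 (pow_pos hrk Q)).ne' ENNReal.ofReal_ne_top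
    (fun F hF => hΓmeas F hF _ hrk) hE]
  exact hk x hx

/-- If `G` carries a family of dilations `(Γ_r)_{r>0}` scaling the Haar
measure by `r^Q`, `E` is a Borel set of finite positive measure, and `r_k → ∞`, then
`(Γ_{r_k}(E))` is a Følner sequence. -/
theorem isFolnerSeq_dilations {G : Type*} [Group G] [TopologicalSpace G]
    [IsTopologicalGroup G] [LocallyCompactSpace G] [SigmaCompactSpace G] [T2Space G]
    [MeasurableSpace G] [BorelSpace G]
    (μ : Measure G) [μ.IsMulRightInvariant] [IsFiniteMeasureOnCompacts μ]
    [μ.IsOpenPosMeasure] [μ.Regular] (hμ : μ ≠ 0)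
    -- the family of dilations: each `Γ r`, `r > 0`, is a group automorphism of `G`,
    (Γ : ℝ → G ≃* G)
    -- which is a homeomorphism,
    (hΓcont : ∀ r : ℝ, 0 < r → Continuous (Γ r) ∧ Continuous (Γ r).symm)
    -- satisfying `Γ r ∘ Γ s = Γ (r * s)`,
    (hΓmul : ∀ r s : ℝ, 0 < r → 0 < s → ∀ x : G, Γ r (Γ s x) = Γ (r * s) x)
    -- continuity in the parameter `r` on `(0, ∞)`,
    (hΓparam : ∀ x : G, ContinuousOn (fun r : ℝ => Γ r x) (Set.Ioi 0))
    -- with `Γ r x → e` as `r ↓ 0`,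
    (hΓzero : ∀ x : G, Tendsto (fun r : ℝ => Γ r x) (nhdsWithin 0 (Set.Ioi 0)) (nhds 1))
    -- and scaling the Haar measure by `r^Q`:
    (Q : ℕ)
    (hΓmeas : ∀ (E : Set G), MeasurableSet E → ∀ r : ℝ, 0 < r →
      μ (Γ r '' E) = ENNReal.ofReal (r ^ Q) * μ E)
    (E : Set G) (hE : MeasurableSet E) (hE0 : 0 < μ E) (hEfin : μ E < ∞)
    (r : ℕ → ℝ) (hr : ∀ k, 0 < r k) (hrtop : Tendsto r atTop atTop) :
    IsFolnerSeq μ (fun k => Γ (r k) '' E) :=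
  isFolnerSeq_dilations_general μ Γ hΓcont hΓmul hΓzero Q hΓmeas E hE hEfin r hrtop
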